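/- Suppose the matrices M_1,…,M_r satisfy conditions (H0), (H1), (H2) and (H3). Let m ∈ ℤ^r with m ≥ 0 and let a ∈ A. Then there exist l ≥ 0 and a word w ∈ W_l such that o(w) = a and, for every nonzero p ∈ ℤ^r with |p| ≤ m, the translate τ_p w and w do not agree on [0,l] ∩ [p, p+l] (i.e. w is not p-periodic). -/

import Mathlib

open Matrix

variable {r : ℕ} {A : Type*}

/-- The `j`-th standard basis vector of `ℤ^r`. -/
def evec (r : ℕ) (j : Fin r) : Fin r → ℤ := fun i => if i = j then 1 else 0

/-- `w` represents a word of shape `m` (only its values on `[0,m]` matter):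
`m ≥ 0` and the transition matrices are respected on the box `[0,m]`. -/
def IsWord (M : Fin r → Matrix A A ℤ) (m : Fin r → ℤ) (w : (Fin r → ℤ) → A) : Prop :=
  0 ≤ m ∧ ∀ (l : Fin r → ℤ) (j : Fin r), 0 ≤ l → l + evec r j ≤ m →
    M j (w (l + evec r j)) (w l) = 1

/-- Two representing functions agree on the box `[0,m]`; this is equality of
words of shape `m`. -/
def AgreeOn (m : Fin r → ℤ) (w w' : (Fin r → ℤ) → A) : Prop :=
  ∀ l : Fin r → ℤ, 0 ≤ l → l ≤ m → w l = w' l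

/-- The restriction `w|[k,k+n]`, as a word based at `0`: `(restrictW k w) i = w (i + k)`. -/
def restrictW (k : Fin r → ℤ) (w : (Fin r → ℤ) → A) : (Fin r → ℤ) → A :=
  fun i => w (i + k)

/-- `w` (a word of shape `m`) is `p`-periodic: the translate `τ_p w`, given by
`(τ_p w)(x) = w (x - p)`, agrees with `w` on `[0,m] ∩ [p,p+m]`. -/
def IsPeriodic (p m : Fin r → ℤ) (w : (Fin r → ℤ) → A) : Prop :=
  ∀ x : Fin r → ℤ, 0 ≤ x → x ≤ m → p ≤ x → x ≤ p + m → w (x - p) = w x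

/-- Condition (H0): each `M j` is nonzero. -/
def H0 (M : Fin r → Matrix A A ℤ) : Prop := ∀ j, M j ≠ 0

/-- Condition (H1): unique products of words. -/
def H1 (M : Fin r → Matrix A A ℤ) : Prop :=
  ∀ (m n : Fin r → ℤ) (u v : (Fin r → ℤ) → A),
    IsWord M m u → IsWord M n v → u m = v 0 →
      (∃ w, IsWord M (m + n) w ∧ AgreeOn m w u ∧ AgreeOn n (restrictW m w) v) ∧
      (∀ w w', IsWord M (m + n) w → AgreeOn m w u → AgreeOn n (restrictW m w) v →
        IsWord M (m + n) w' → AgreeOn m w' u → AgreeOn n (restrictW m w') v →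
        AgreeOn (m + n) w w')

/-- Condition (H2): the directed graph on `A` with an edge `a → b` whenever
`M i b a = 1` for some `i` is irreducible. -/
def H2 (M : Fin r → Matrix A A ℤ) : Prop :=
  ∀ a b : A, Relation.ReflTransGen (fun x y => ∃ i, M i y x = 1) a b

/-- Condition (H3): for each nonzero `p ∈ ℤ^r` there is a non-`p`-periodic word. -/
def H3 (M : Fin r → Matrix A A ℤ) : Prop :=
  ∀ p : Fin r → ℤ, p ≠ 0 → ∃ (m : Fin r → ℤ) (w : (Fin r → ℤ) → A),
    IsWord M m w ∧ ¬ IsPeriodic p m w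

/-- Condition (H1a): the matrices commute. -/
def H1a [Fintype A] (M : Fin r → Matrix A A ℤ) : Prop :=
  ∀ i j, M i * M j = M j * M i

/-- Condition (H1b): for `i < j`, the entries of `M i * M j` lie in `{0,1}`. -/
def H1b [Fintype A] (M : Fin r → Matrix A A ℤ) : Prop :=
  ∀ i j, i < j → ∀ a b : A, (M i * M j) b a = 0 ∨ (M i * M j) b a = 1

/-- Condition (H1c): for `i < j < k`, the entries of `M i * M j * M k` lie in `{0,1}`. -/
def H1c [Fintype A] (M : Fin r → Matrix A A ℤ) : Prop :=
  ∀ i j k, i < j → j < k → ∀ a b : A,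
    (M i * M j * M k) b a = 0 ∨ (M i * M j * M k) b a = 1

/-- Condition (H3*). -/
def H3star (M : Fin r → Matrix A A ℤ) : Prop :=
  ∀ (j : Fin r) (m : Fin r → ℤ), m j = 0 → ∀ w : (Fin r → ℤ) → A, IsWord M m w →
    ∃ u u', IsWord M (m + evec r j) u ∧ IsWord M (m + evec r j) u' ∧
      AgreeOn m u w ∧ AgreeOn m u' w ∧ u (evec r j) ≠ u' (evec r j)

/-- `x` represents the product word `uv` of `u ∈ W_m` and `v ∈ W_n`. -/
def IsProd (M : Fin r → Matrix A A ℤ) (m n : Fin r → ℤ)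
    (u v x : (Fin r → ℤ) → A) : Prop :=
  IsWord M (m + n) x ∧ AgreeOn m x u ∧ AgreeOn n (restrictW m x) v

/-!
For a single nonzero period `p`, (H3) provides a word `v` that is not `p`-periodic. Any word `w`
can be extended to one containing `v` as a subword: (H2) gives a word leading from the terminal
letter of `w` to the origin of `v`, and (H1) glues the three together. Non-periodicity passes from
a subword to the whole word, and periodicity of the extension would restrict to periodicity of `w`,
so extending successively for each of the finitely many nonzero `p` with `|p| ≤ m`, starting from
the one-letter word `a`, produces the required word.
-/

section Words

variable {M : Fin r → Matrix A A ℤ}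

lemma evec_nonneg (j : Fin r) : 0 ≤ evec r j := by
  intro i
  unfold evec
  split_ifs <;> simp

lemma evec_ne_zero (j : Fin r) : evec r j ≠ 0 := fun h => by
  simpa [evec] using congrFun h j

lemma eq_zero_and_eq_of_add_evec_le_evec {l : Fin r → ℤ} {i j : Fin r} (hl : 0 ≤ l)
    (hle : l + evec r j ≤ evec r i) : l = 0 ∧ j = i := by
  have hj := hle j
  have hlj := hl j
  simp only [Pi.add_apply, evec, ↓reduceIte, Pi.zero_apply] at hj hlj
  have hji : j = i := by
    by_contra hne
    rw [if_neg hne] at hj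
    omega
  subst hji
  refine ⟨funext fun k => ?_, rfl⟩
  have hk := hle k
  have hlk := hl k
  simp only [Pi.add_apply, evec, Pi.zero_apply] at hk hlk ⊢
  split_ifs at hk <;> omega

lemma isWord_zero (M : Fin r → Matrix A A ℤ) (a : A) : IsWord M 0 (fun _ => a) := by
  refine ⟨le_rfl, fun l j hl hle => absurd (hle j) ?_⟩
  have : 0 ≤ l j := hl j
  simp only [Pi.add_apply, evec, ↓reduceIte, Pi.zero_apply]
  omega

lemma isWord_evec {i : Fin r} {a b : A} (h : M i b a = 1) :
    IsWord M (evec r i) (fun x => if x = 0 then a else b) := by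
  refine ⟨evec_nonneg i, fun l j hl hle => ?_⟩
  obtain ⟨rfl, rfl⟩ := eq_zero_and_eq_of_add_evec_le_evec hl hle
  simpa [evec_ne_zero] using h

lemma AgreeOn.trans {m : Fin r → ℤ} {u v w : (Fin r → ℤ) → A} (huv : AgreeOn m u v)
    (hvw : AgreeOn m v w) : AgreeOn m u w :=
  fun l h₀ h₁ => (huv l h₀ h₁).trans (hvw l h₀ h₁)

lemma AgreeOn.mono {m n : Fin r → ℤ} {u v : (Fin r → ℤ) → A} (h : AgreeOn n u v) (hmn : m ≤ n) :
    AgreeOn m u v :=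
  fun l h₀ h₁ => h l h₀ (h₁.trans hmn)

lemma H1.exists_isProd (h1 : H1 M) {m n : Fin r → ℤ} {u v : (Fin r → ℤ) → A}
    (hu : IsWord M m u) (hv : IsWord M n v) (h : u m = v 0) : ∃ x, IsProd M m n u v x :=
  (h1 m n u v hu hv h).1

namespace IsProd

variable {m n : Fin r → ℤ} {u v x : (Fin r → ℤ) → A}

lemma apply_zero (hx : IsProd M m n u v x) (hu : IsWord M m u) : x 0 = u 0 :=
  hx.2.1 0 le_rfl hu.1

lemma apply_shape (hx : IsProd M m n u v x) (hv : IsWord M n v) : x (m + n) = v n := by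
  simpa [restrictW, add_comm] using hx.2.2 n hv.1 le_rfl

end IsProd

lemma exists_word_of_reflTransGen (h1 : H1 M) {a b : A}
    (hab : Relation.ReflTransGen (fun x y => ∃ i, M i y x = 1) a b) :
    ∃ (s : Fin r → ℤ) (u : (Fin r → ℤ) → A), IsWord M s u ∧ u 0 = a ∧ u s = b := by
  induction hab with
  | refl => exact ⟨0, fun _ => a, isWord_zero M a, rfl, rfl⟩
  | tail _ hstep ih =>
    obtain ⟨s, u, hu, hu0, hus⟩ := ih
    obtain ⟨i, hi⟩ := hstep
    have hedge := isWord_evec hi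
    obtain ⟨x, hx⟩ := h1.exists_isProd hu hedge (by simpa using hus)
    refine ⟨s + evec r i, x, hx.1, (hx.apply_zero hu).trans hu0, ?_⟩
    simpa [evec_ne_zero] using hx.apply_shape hedge

end Words

section Periodicity

variable {p : Fin r → ℤ}

lemma IsPeriodic.congr {n : Fin r → ℤ} {x y : (Fin r → ℤ) → A} (hx : IsPeriodic p n x)
    (hxy : AgreeOn n x y) : IsPeriodic p n y := by
  intro z h₀ h₁ h₂ h₃
  rw [← hxy z h₀ h₁, ← hxy _ (sub_nonneg.mpr h₂) (sub_le_iff_le_add'.mpr h₃)]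
  exact hx z h₀ h₁ h₂ h₃

lemma IsPeriodic.restrictW {k n L : Fin r → ℤ} {x : (Fin r → ℤ) → A} (hx : IsPeriodic p L x)
    (hk : 0 ≤ k) (hkn : k + n ≤ L) : IsPeriodic p n (restrictW k x) := by
  intro z h₀ h₁ h₂ h₃
  have hzk : z - p + k = z + k - p := by abel
  simp only [_root_.restrictW, hzk]
  refine hx (z + k) (add_nonneg h₀ hk) ?_ (h₂.trans (le_add_of_nonneg_right hk)) ?_
  · calc z + k ≤ n + k := add_le_add_left h₁ k
      _ ≤ L := by rwa [add_comm]
  · calc z + k ≤ p + n + k := add_le_add_left h₃ k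
      _ = p + (k + n) := by abel
      _ ≤ p + L := add_le_add_right hkn p

lemma IsPeriodic.of_agreeOn {l L : Fin r → ℤ} {x w : (Fin r → ℤ) → A} (hx : IsPeriodic p L x)
    (hlL : l ≤ L) (hxw : AgreeOn l x w) : IsPeriodic p l w := by
  have h := hx.restrictW le_rfl (by simpa using hlL)
  exact h.congr fun z h₀ h₁ => by simpa [_root_.restrictW] using hxw z h₀ h₁

end Periodicity

section Construction

variable {M : Fin r → Matrix A A ℤ}

lemma exists_extension_not_isPeriodic (h1 : H1 M) (h2 : H2 M) (h3 : H3 M) {p l : Fin r → ℤ}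
    {w : (Fin r → ℤ) → A} (hp : p ≠ 0) (hw : IsWord M l w) :
    ∃ (L : Fin r → ℤ) (x : (Fin r → ℤ) → A),
      IsWord M L x ∧ l ≤ L ∧ AgreeOn l x w ∧ ¬ IsPeriodic p L x := by
  obtain ⟨n, v, hv, hvp⟩ := h3 p hp
  obtain ⟨s, u, hu, hu0, hus⟩ := exists_word_of_reflTransGen h1 (h2 (w l) (v 0))
  obtain ⟨y, hy⟩ := h1.exists_isProd hw hu hu0.symm
  obtain ⟨x, hx⟩ := h1.exists_isProd hy.1 hv ((hy.apply_shape hu).trans hus)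
  have hls : l ≤ l + s := le_add_of_nonneg_right hu.1
  refine ⟨l + s + n, x, hx.1, hls.trans (le_add_of_nonneg_right hv.1),
    (hx.2.1.mono hls).trans hy.2.1, fun hper => hvp ?_⟩
  exact (hper.restrictW (add_nonneg hw.1 hu.1) le_rfl).congr hx.2.2

lemma exists_word_not_isPeriodic_of_finset (h1 : H1 M) (h2 : H2 M) (h3 : H3 M) (a : A)
    (S : Finset (Fin r → ℤ)) (hS : (0 : Fin r → ℤ) ∉ S) :
    ∃ (l : Fin r → ℤ) (w : (Fin r → ℤ) → A),
      IsWord M l w ∧ w 0 = a ∧ ∀ p ∈ S, ¬ IsPeriodic p l w := by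
  classical
  induction S using Finset.induction_on with
  | empty => exact ⟨0, fun _ => a, isWord_zero M a, rfl, by simp⟩
  | @insert p S _ ih =>
    obtain ⟨l, w, hw, hw0, hwS⟩ := ih fun h => hS (Finset.mem_insert_of_mem h)
    have hp : p ≠ 0 := fun h => hS (h ▸ Finset.mem_insert_self p S)
    obtain ⟨L, x, hx, hlL, hxw, hxp⟩ := exists_extension_not_isPeriodic h1 h2 h3 hp hw
    refine ⟨L, x, hx, (hxw 0 le_rfl hw.1).trans hw0, fun q hq hper => ?_⟩
    rcases Finset.mem_insert.mp hq with rfl | hqS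
    · exact hxp hper
    · exact hwS q hqS (hper.of_agreeOn hlL hxw)

end Construction

theorem stmt_13_general
    (M : Fin r → Matrix A A ℤ)
    (h1 : H1 M) (h2 : H2 M) (h3 : H3 M)
    (m : Fin r → ℤ) (a : A) :
    ∃ (l : Fin r → ℤ) (w : (Fin r → ℤ) → A),
      IsWord M l w ∧ w 0 = a ∧
      ∀ p : Fin r → ℤ, p ≠ 0 → (fun i => |p i|) ≤ m → ¬ IsPeriodic p l w := by
  classical
  let S := (Fintype.piFinset fun i => Finset.Icc (-m i) (m i)).erase 0
  obtain ⟨l, w, hw, hw0, hwS⟩ :=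
    exists_word_not_isPeriodic_of_finset h1 h2 h3 a S (Finset.notMem_erase 0 _)
  refine ⟨l, w, hw, hw0, fun p hp hpm => hwS p ?_⟩
  exact Finset.mem_erase.mpr ⟨hp, Fintype.mem_piFinset.mpr fun i =>
    Finset.mem_Icc.mpr (abs_le.mp (hpm i))⟩

/-- under (H0)-(H3), for `m ≥ 0` and `a ∈ A` there is a word `w`
with `o(w) = a` which is not `p`-periodic for any nonzero `p` with `|p| ≤ m`. -/
theorem stmt_13 [Fintype A] [Nonempty A] (hr : 0 < r)
    (M : Fin r → Matrix A A ℤ)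
    (hM : ∀ j (a b : A), M j b a = 0 ∨ M j b a = 1)
    (h0 : H0 M) (h1 : H1 M) (h2 : H2 M) (h3 : H3 M)
    (m : Fin r → ℤ) (hm : 0 ≤ m) (a : A) :
    ∃ (l : Fin r → ℤ) (w : (Fin r → ℤ) → A),
      IsWord M l w ∧ w 0 = a ∧
      ∀ p : Fin r → ℤ, p ≠ 0 → (fun i => |p i|) ≤ m → ¬ IsPeriodic p l w :=
  stmt_13_general M h1 h2 h3 m a
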